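/- arXiv:1803.08552 — 6 statements merged into one kernel-verified Lean document; each statement's English description precedes it below -/
import Mathlib

section
/- Suppose the nominal trajectory satisfies z(k+1) = Az(k) + Bv(k), the true system satisfies x(k+1) = Ax(k) + Bv(k) + BK(x(k) - z(k)) + w(k) with w(k) ∈ W, and the initial error x(0) - z(0) lies in an RPI set Ω for the error dynamics e ↦ (A+BK)e + w. If z(k) ∈ X ⊖ Ω (Pontryagin difference) for all k, then x(k) ∈ X for all k. -/
/-- Pontryagin set difference. -/
def pdiff {α : Type*} [Add α] (A B : Set α) : Set α := {x | ∀ b ∈ B, x + b ∈ A}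

/-- tube containment implies state constraint satisfaction. -/
theorem tube_state_constraints
    {n m : ℕ} (A : Matrix (Fin n) (Fin n) ℝ) (B : Matrix (Fin n) (Fin m) ℝ)
    (K : Matrix (Fin m) (Fin n) ℝ) (W Ω X : Set (Fin n → ℝ))
    (hRPI : ∀ e ∈ Ω, ∀ w ∈ W, (A + B * K).mulVec e + w ∈ Ω)
    (x z : ℕ → (Fin n → ℝ)) (v : ℕ → (Fin m → ℝ)) (w : ℕ → (Fin n → ℝ))
    (hw : ∀ k, w k ∈ W)
    (hznom : ∀ k, z (k + 1) = A.mulVec (z k) + B.mulVec (v k))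
    (hxdyn : ∀ k, x (k + 1) =
      A.mulVec (x k) + B.mulVec (v k) + B.mulVec (K.mulVec (x k - z k)) + w k)
    (h0 : x 0 - z 0 ∈ Ω)
    (hz : ∀ k, z k ∈ pdiff X Ω) :
    ∀ k, x k ∈ X := by
  have he : ∀ k, x k - z k ∈ Ω := by
    intro k
    induction k with
    | zero => exact h0
    | succ k ih =>
      have : x (k + 1) - z (k + 1) = (A + B * K).mulVec (x k - z k) + w k := by
        rw [hxdyn, hznom, Matrix.add_mulVec, ← Matrix.mulVec_mulVec]
        ext i
        simp [Pi.sub_apply, Pi.add_apply, Matrix.mulVec_sub]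
        ring
      rw [this]
      exact hRPI _ ih _ (hw k)
  intro k
  have := hz k (x k - z k) (he k)
  simpa using this
end

section
/- If X_f is a (nominally) invariant set for z ↦ Az + Bσ(z) with σ : X_f → Ū, and Ω is an RPI set for the error dynamics e ↦ (A+BK)e + w with w ∈ W, then the set S_f = X_f ⊕ Ω is robust controlled invariant: for every x ∈ X_f ⊕ Ω there exists an input u ∈ ℝ^m (namely u = σ(z) + K(x - z) for a decomposition x = z + e with z ∈ X_f, e ∈ Ω) such that Ax + Bu + w ∈ X_f ⊕ Ω for all w ∈ W. -/
/-- Minkowski sum. -/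
def msum {α : Type*} [Add α] (A B : Set α) : Set α := {x | ∃ a ∈ A, ∃ b ∈ B, x = a + b}

/-- `X_f ⊕ Ω` is robust controlled invariant. -/
theorem terminal_set_robust_controlled_invariant
    {n m : ℕ} (A : Matrix (Fin n) (Fin n) ℝ) (B : Matrix (Fin n) (Fin m) ℝ)
    (K : Matrix (Fin m) (Fin n) ℝ) (W Xf Ω : Set (Fin n → ℝ))
    (Ubar : Set (Fin m → ℝ)) (σ : (Fin n → ℝ) → (Fin m → ℝ))
    (hσU : ∀ z ∈ Xf, σ z ∈ Ubar)
    (hinv : ∀ z ∈ Xf, A.mulVec z + B.mulVec (σ z) ∈ Xf)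
    (hRPI : ∀ e ∈ Ω, ∀ w ∈ W, (A + B * K).mulVec e + w ∈ Ω) :
    ∀ x ∈ msum Xf Ω, ∃ u : Fin m → ℝ,
      (∃ z ∈ Xf, ∃ e ∈ Ω, x = z + e ∧ u = σ z + K.mulVec (x - z)) ∧
      ∀ w ∈ W, A.mulVec x + B.mulVec u + w ∈ msum Xf Ω := by
  rintro x ⟨z, hz, e, he, rfl⟩
  refine ⟨σ z + K.mulVec (z + e - z), ⟨z, hz, e, he, rfl, rfl⟩, ?_⟩
  intro w hw
  refine ⟨A.mulVec z + B.mulVec (σ z), hinv z hz,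
    (A + B * K).mulVec e + w, hRPI e he w hw, ?_⟩
  simp [Matrix.add_mulVec, Matrix.mulVec_add, Matrix.mulVec_mulVec]
  module
end

section
/- If the union X_f' = conv({z₁,…,z_M}) ∪ X_f is convex, each z_j ∈ X_f' admits an admissible input v_j ∈ Ū steering it into X_f' in one nominal step (A z_j + B v_j ∈ X_f'), and X_f is nominally invariant under some σ : X_f → Ū, then X_f' is nominally controlled invariant: for every z ∈ X_f' there exists v ∈ Ū with Az + Bv ∈ X_f'. -/
/-- the enlarged terminal set is nominally controlled invariant. -/
theorem enlarged_terminal_set_controlled_invariant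
    {n m M : ℕ} (A : Matrix (Fin n) (Fin n) ℝ) (B : Matrix (Fin n) (Fin m) ℝ)
    (Ubar : Set (Fin m → ℝ)) (hUbar : Convex ℝ Ubar)
    (Xf : Set (Fin n → ℝ)) (z : Fin M → (Fin n → ℝ))
    (Xf' : Set (Fin n → ℝ))
    (hXf' : Xf' = convexHull ℝ (Set.range z) ∪ Xf)
    (hconv : Convex ℝ Xf')
    (hz : ∀ j, ∃ v ∈ Ubar, A.mulVec (z j) + B.mulVec v ∈ Xf')
    (σ : (Fin n → ℝ) → (Fin m → ℝ))
    (hσU : ∀ w ∈ Xf, σ w ∈ Ubar)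
    (hinv : ∀ w ∈ Xf, A.mulVec w + B.mulVec (σ w) ∈ Xf) :
    ∀ x ∈ Xf', ∃ v ∈ Ubar, A.mulVec x + B.mulVec v ∈ Xf' := by
  set S : Set (Fin n → ℝ) := {x | ∃ v ∈ Ubar, A.mulVec x + B.mulVec v ∈ Xf'} with hS
  have hSconv : Convex ℝ S := by
    rintro x ⟨vx, hvx, hx⟩ y ⟨vy, hvy, hy⟩ a b ha hb hab
    refine ⟨a • vx + b • vy, hUbar hvx hvy ha hb hab, ?_⟩
    have : A.mulVec (a • x + b • y) + B.mulVec (a • vx + b • vy)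
        = a • (A.mulVec x + B.mulVec vx) + b • (A.mulVec y + B.mulVec vy) := by
      simp [Matrix.mulVec_add, Matrix.mulVec_smul, smul_add]
      module
    rw [this]
    exact hconv hx hy ha hb hab
  intro x hx
  rw [hXf'] at hx
  rcases hx with hx | hx
  · have hsub : Set.range z ⊆ S := by
      rintro _ ⟨j, rfl⟩
      exact hz j
    exact (convexHull_min hsub hSconv) hx
  · exact ⟨σ x, hσU x hx, by rw [hXf']; exact Or.inr (hinv x hx)⟩
end

section
/- Recursive feasibility of the tube MPC problem: suppose (z₀*,…,z_N*, v₀*,…,v_{N-1}*) is feasible for the MPSC problem at state x (i.e., z_{i+1}* = Az_i* + Bv_i*, (z_i*, v_i*) ∈ X̄ × Ū, z_N* ∈ X_f, x - z₀* ∈ Ω), the applied input is u = v₀* + K(x - z₀*), the next state is x⁺ = Ax + Bu + w with w ∈ W, Ω is RPI for e ↦ (A+BK)e + w, X_f ⊆ X̄ is nominally controlled invariant via σ : X_f → Ū, and X̄, Ū, Ω, X_f are as above. Then the shifted trajectory (z₁*,…,z_N*, Az_N* + Bσ(z_N*)) with inputs (v₁*,…,v_{N-1}*, σ(z_N*)) is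 feasible for the MPSC problem at x⁺, in particular x⁺ - z₁* ∈ Ω. -/
/-- recursive feasibility of the tube MPC (MPSC) problem. -/
theorem mpsc_recursive_feasibility
    {n m : ℕ} (A : Matrix (Fin n) (Fin n) ℝ) (B : Matrix (Fin n) (Fin m) ℝ)
    (K : Matrix (Fin m) (Fin n) ℝ) (N : ℕ) (hN : 1 ≤ N)
    (W Xbar Xf Ω : Set (Fin n → ℝ)) (Ubar : Set (Fin m → ℝ))
    (hXfXbar : Xf ⊆ Xbar)
    (σ : (Fin n → ℝ) → (Fin m → ℝ))
    (hσU : ∀ s ∈ Xf, σ s ∈ Ubar)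
    (hσinv : ∀ s ∈ Xf, A.mulVec s + B.mulVec (σ s) ∈ Xf)
    (hRPI : ∀ e ∈ Ω, ∀ w ∈ W, (A + B * K).mulVec e + w ∈ Ω)
    -- feasible solution at `x`
    (x : Fin n → ℝ) (z : ℕ → (Fin n → ℝ)) (v : ℕ → (Fin m → ℝ))
    (hdyn : ∀ i < N, z (i + 1) = A.mulVec (z i) + B.mulVec (v i))
    (hcon : ∀ i < N, z i ∈ Xbar ∧ v i ∈ Ubar)
    (hterm : z N ∈ Xf)
    (hinit : x - z 0 ∈ Ω)
    -- applied input and next state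
    (u : Fin m → ℝ) (hu : u = v 0 + K.mulVec (x - z 0))
    (w : Fin n → ℝ) (hw : w ∈ W)
    (xplus : Fin n → ℝ) (hxplus : xplus = A.mulVec x + B.mulVec u + w)
    -- shifted candidate trajectory
    (z' : ℕ → (Fin n → ℝ)) (v' : ℕ → (Fin m → ℝ))
    (hz' : ∀ i, z' i = if i < N then z (i + 1)
      else A.mulVec (z N) + B.mulVec (σ (z N)))
    (hv' : ∀ i, v' i = if i + 1 < N then v (i + 1) else σ (z N)) :
    (∀ i < N, z' (i + 1) = A.mulVec (z' i) + B.mulVec (v' i)) ∧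
    (∀ i < N, z' i ∈ Xbar ∧ v' i ∈ Ubar) ∧
    z' N ∈ Xf ∧
    xplus - z' 0 ∈ Ω ∧ xplus - z 1 ∈ Ω := by
  have key : xplus - z 1 ∈ Ω := by
    have h0 : (0:ℕ) < N := hN
    have hz1 : z 1 = A.mulVec (z 0) + B.mulVec (v 0) := hdyn 0 h0
    have hx : xplus - z 1 = (A + B * K).mulVec (x - z 0) + w := by
      simp only [hxplus, hz1, hu, Matrix.add_mulVec, Matrix.mulVec_sub, Matrix.mulVec_add,
        ← Matrix.mulVec_mulVec]
      abel
    rw [hx]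
    exact hRPI _ hinit w hw
  refine ⟨?_, ?_, ?_, ?_, key⟩
  · intro i hi
    rw [hz' (i+1), hz' i, hv' i, if_pos hi]
    by_cases h : i + 1 < N
    · rw [if_pos h, if_pos h]
      exact hdyn (i+1) h
    · have hiN : i + 1 = N := le_antisymm hi (not_lt.mp h)
      rw [if_neg h, if_neg h, hiN]
  · intro i hi
    rw [hz' i, hv' i, if_pos hi]
    by_cases h : i + 1 < N
    · rw [if_pos h]
      exact hcon (i+1) h
    · have hiN : i + 1 = N := le_antisymm hi (not_lt.mp h)
      rw [if_neg h, hiN]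
      exact ⟨hXfXbar hterm, hσU _ hterm⟩
  · rw [hz' N, if_neg (lt_irrefl N)]
    exact hσinv _ hterm
  · rw [hz' 0, if_pos (show 0 < N from hN)]
    exact key
end

section
/- If the LMI condition of the previous statement holds for every w ∈ W (with a common P ≻ 0 and τ > 0), then the ellipsoid Ω = {e ∈ ℝ^n : e^T P e ≤ 1} is a robust positively invariant set for the dynamics e(k+1) = A_cl e(k) + w(k), w(k) ∈ W. -/
/-!
With `V x = xᵀ P x`, the quadratic form of the LMI matrix at the vector `(e, 1)` equals
`(V (A e + w) - 1) - τ (V e - 1)`, so negative semidefiniteness is the S-procedure inequality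
`V (A e + w) - 1 ≤ τ (V e - 1)`; for `τ ≥ 0` its right-hand side is nonpositive on `{V ≤ 1}`.
-/

namespace Matrix

variable {m n ι R : Type*} [Fintype m] [Fintype n] [Fintype ι]

theorem sumElim_dotProduct_fromBlocks_mulVec_sumElim [NonUnitalNonAssocSemiring R]
    (A : Matrix m m R) (B : Matrix m n R) (C : Matrix n m R) (D : Matrix n n R)
    (x : m → R) (y : n → R) :
    Sum.elim x y ⬝ᵥ fromBlocks A B C D *ᵥ Sum.elim x y =
      x ⬝ᵥ A *ᵥ x + x ⬝ᵥ B *ᵥ y + (y ⬝ᵥ C *ᵥ x + y ⬝ᵥ D *ᵥ y) := by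
  rw [fromBlocks_mulVec, sumElim_dotProduct_sumElim, Sum.elim_comp_inl, Sum.elim_comp_inr,
    dotProduct_add, dotProduct_add]

theorem sumElim_one_dotProduct_fromBlocks_replicate_mulVec [CommSemiring R]
    (A : Matrix m m R) (b : m → R) (d : R) (x : m → R) :
    Sum.elim x 1 ⬝ᵥ
        fromBlocks A (replicateCol Unit b) (replicateRow Unit b) (of fun _ _ => d) *ᵥ
          Sum.elim x 1 =
      x ⬝ᵥ A *ᵥ x + 2 * (x ⬝ᵥ b) + d := by
  have hcol : replicateCol Unit b *ᵥ 1 = b := by ext; simp [mulVec]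
  rw [sumElim_dotProduct_fromBlocks_mulVec_sumElim, hcol, replicateRow_mulVec_eq_const,
    dotProduct_comm b x]
  simp only [dotProduct, mulVec, Finset.univ_unique, PUnit.default_eq_unit, Pi.one_apply,
    Function.const_apply, one_mul, Finset.sum_const, Finset.card_singleton, one_smul, of_apply,
    mul_one]
  ring

theorem IsSymm.add_dotProduct_mulVec_add [CommSemiring R] {P : Matrix ι ι R} (hP : P.IsSymm)
    (u v : ι → R) :
    (u + v) ⬝ᵥ P *ᵥ (u + v) = u ⬝ᵥ P *ᵥ u + 2 * (u ⬝ᵥ P *ᵥ v) + v ⬝ᵥ P *ᵥ v := by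
  have : v ⬝ᵥ P *ᵥ u = u ⬝ᵥ P *ᵥ v := by
    rw [dotProduct_comm, dotProduct_mulVec, ← mulVec_transpose, hP.eq]
  rw [mulVec_add, dotProduct_add, add_dotProduct, add_dotProduct, this]
  ring

theorem dotProduct_transpose_mul_mulVec [CommSemiring R] (A : Matrix ι m R) (M : Matrix ι n R)
    (x : m → R) (y : n → R) :
    x ⬝ᵥ (Aᵀ * M) *ᵥ y = A *ᵥ x ⬝ᵥ M *ᵥ y := by
  rw [← mulVec_mulVec, dotProduct_mulVec, vecMul_transpose]

variable [CommRing R]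

def rpiLMI (P A : Matrix ι ι R) (τ : R) (w : ι → R) : Matrix (ι ⊕ Unit) (ι ⊕ Unit) R :=
  fromBlocks (Aᵀ * P * A - τ • P) (replicateCol Unit ((Aᵀ * P) *ᵥ w))
    (replicateRow Unit ((Aᵀ * P) *ᵥ w)) (of fun _ _ => w ⬝ᵥ P *ᵥ w + τ - 1)

theorem sumElim_one_dotProduct_rpiLMI_mulVec {P : Matrix ι ι R} (hP : P.IsSymm)
    (A : Matrix ι ι R) (τ : R) (w x : ι → R) :
    Sum.elim x 1 ⬝ᵥ rpiLMI P A τ w *ᵥ Sum.elim x 1 =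
      (A *ᵥ x + w) ⬝ᵥ P *ᵥ (A *ᵥ x + w) - 1 - τ * (x ⬝ᵥ P *ᵥ x - 1) := by
  rw [rpiLMI, sumElim_one_dotProduct_fromBlocks_replicate_mulVec, hP.add_dotProduct_mulVec_add,
    sub_mulVec, dotProduct_sub, smul_mulVec, dotProduct_smul, smul_eq_mul,
    ← mulVec_mulVec, dotProduct_transpose_mul_mulVec, dotProduct_transpose_mul_mulVec]
  ring

theorem dotProduct_mulVec_step_le_of_posSemidef_neg_rpiLMI [PartialOrder R] [StarRing R]
    [TrivialStar R] [IsOrderedAddMonoid R] {P A : Matrix ι ι R} {τ : R} {w : ι → R} (hP : P.IsSymm)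
    (hLMI : (-rpiLMI P A τ w).PosSemidef) (x : ι → R) :
    (A *ᵥ x + w) ⬝ᵥ P *ᵥ (A *ᵥ x + w) - 1 ≤ τ * (x ⬝ᵥ P *ᵥ x - 1) := by
  have h := hLMI.dotProduct_mulVec_nonneg (Sum.elim x 1)
  rw [star_trivial, neg_mulVec, dotProduct_neg, neg_nonneg,
    sumElim_one_dotProduct_rpiLMI_mulVec hP] at h
  exact sub_nonpos.mp h

end Matrix

open Matrix

/-- if the LMI certificate holds for every disturbance in `W`,
then the ellipsoid `{e | eᵀ P e ≤ 1}` is robust positively invariant for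
`e ↦ A_cl e + w`, `w ∈ W`. -/
theorem lmi_implies_rpi_ellipsoid
    {n : ℕ} (P Acl : Matrix (Fin n) (Fin n) ℝ) (τ : ℝ) (W : Set (Fin n → ℝ))
    (hP : P.PosDef) (hτ : 0 < τ)
    (hLMI : ∀ w ∈ W, (-(Matrix.fromBlocks
        (Aclᵀ * P * Acl - τ • P)
        (Matrix.of fun i (_ : Unit) => (Aclᵀ * P).mulVec w i)
        (Matrix.of fun (_ : Unit) j => ((Aclᵀ * P).mulVec w) j)
        (Matrix.of fun (_ : Unit) (_ : Unit) => w ⬝ᵥ P.mulVec w + τ - 1))).PosSemidef) :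
    ∀ e ∈ {e : Fin n → ℝ | e ⬝ᵥ P.mulVec e ≤ 1}, ∀ w ∈ W,
      Acl.mulVec e + w ∈ {e : Fin n → ℝ | e ⬝ᵥ P.mulVec e ≤ 1} := by
  intro e he w hw
  -- `replicateCol` and `replicateRow` unfold to the `Matrix.of` blocks above, so `hLMI w hw`
  -- is `(-rpiLMI P Acl τ w).PosSemidef` by definition.
  have hstep := dotProduct_mulVec_step_le_of_posSemidef_neg_rpiLMI
    (isHermitian_iff_isSymm.mp hP.isHermitian) (hLMI w hw) e
  have hdecay : τ * (e ⬝ᵥ P *ᵥ e - 1) ≤ 0 :=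
    mul_nonpos_of_nonneg_of_nonpos hτ.le (sub_nonpos.mpr he)
  rw [Set.mem_ofPred_eq]
  linarith
end

section
/- Safety of the switched MPSC strategy: suppose at time k̄ the MPSC problem was feasible at x(k̄) with optimal nominal trajectory (z₀*,…,z_N*) and inputs (v₀*,…,v_{N-1}*), satisfying x(k̄) - z₀* ∈ Ω, z_i* ∈ X ⊖ Ω, v_i* ∈ U ⊖ KΩ, and z_N* ∈ S_f ⊖ Ω with S_f ⊆ X a safe set. If for i = 1,…,N-1 the backup input u(k̄+i) = v_i* + K(x(k̄+i) - z_i*) is applied, then u(k̄+i) ∈ U and x(k̄+i) ∈ X for i = 1,…,N-1, and x(k̄+N) ∈ S_f. -/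
/-- A set `S ⊆ X` is safe: from every state in `S` some admissible
(history-dependent) policy keeps the state in `X` for all future times. -/
def SafeSet {n m : ℕ} (A : Matrix (Fin n) (Fin n) ℝ) (B : Matrix (Fin n) (Fin m) ℝ)
    (W X : Set (Fin n → ℝ)) (U : Set (Fin m → ℝ)) (S : Set (Fin n → ℝ)) : Prop :=
  S ⊆ X ∧
  ∀ x₀ ∈ S, ∃ π : (k : ℕ) → (Fin (k + 1) → (Fin n → ℝ)) → (Fin m → ℝ),
    (∀ k h, π k h ∈ U) ∧
    ∀ x w : ℕ → (Fin n → ℝ),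
      x 0 = x₀ → (∀ k, w k ∈ W) →
      (∀ k, x (k + 1) =
        A.mulVec (x k) + B.mulVec (π k (fun i : Fin (k + 1) => x i)) + w k) →
      ∀ k, x k ∈ X

/-- safety of the backup trajectory produced by the MPSC
problem, applied from time `k̄` on. -/
theorem mpsc_backup_safety
    {n m : ℕ} (A : Matrix (Fin n) (Fin n) ℝ) (B : Matrix (Fin n) (Fin m) ℝ)
    (K : Matrix (Fin m) (Fin n) ℝ) (N : ℕ)
    (W X Ω Sf : Set (Fin n → ℝ)) (U : Set (Fin m → ℝ))
    (hRPI : ∀ e ∈ Ω, ∀ w ∈ W, (A + B * K).mulVec e + w ∈ Ω)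
    (hSfX : Sf ⊆ X) (hSfSafe : SafeSet A B W X U Sf)
    (kbar : ℕ)
    (x : ℕ → (Fin n → ℝ)) (u : ℕ → (Fin m → ℝ)) (w : ℕ → (Fin n → ℝ))
    (z : ℕ → (Fin n → ℝ)) (v : ℕ → (Fin m → ℝ))
    -- feasibility of the MPSC problem at `x k̄`
    (hinit : x kbar - z 0 ∈ Ω)
    (hznom : ∀ i < N, z (i + 1) = A.mulVec (z i) + B.mulVec (v i))
    (hzX : ∀ i < N, z i ∈ pdiff X Ω)
    (hvU : ∀ i < N, v i ∈ pdiff U (K.mulVec '' Ω))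
    (hterm : z N ∈ pdiff Sf Ω)
    -- applied backup inputs and resulting closed-loop trajectory
    (hw : ∀ i < N, w (kbar + i) ∈ W)
    (hu : ∀ i < N, u (kbar + i) = v i + K.mulVec (x (kbar + i) - z i))
    (hxdyn : ∀ i < N, x (kbar + i + 1) =
      A.mulVec (x (kbar + i)) + B.mulVec (u (kbar + i)) + w (kbar + i)) :
    (∀ i, 1 ≤ i → i ≤ N - 1 → u (kbar + i) ∈ U ∧ x (kbar + i) ∈ X) ∧
    x (kbar + N) ∈ Sf := by
  have key : ∀ i, i ≤ N → x (kbar + i) - z i ∈ Ω := by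
    intro i hi
    induction i with
    | zero => simpa using hinit
    | succ j ih =>
      have hj : j < N := Nat.lt_of_succ_le hi
      have ihj := ih (Nat.le_of_lt hj)
      have hx := hxdyn j hj
      have hz := hznom j hj
      have hcalc : x (kbar + (j + 1)) - z (j + 1)
          = (A + B * K).mulVec (x (kbar + j) - z j) + w (kbar + j) := by
        rw [show kbar + (j + 1) = kbar + j + 1 from rfl, hx, hz, hu j hj]
        simp [Matrix.add_mulVec, Matrix.mulVec_sub, Matrix.mulVec_add,
          ← Matrix.mulVec_mulVec]
        abel
      rw [hcalc]
      exact hRPI _ ihj _ (hw j hj)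
  constructor
  · intro i h1 h2
    have hi : i < N := by omega
    have he := key i (Nat.le_of_lt hi)
    constructor
    · rw [hu i hi]
      exact hvU i hi _ ⟨_, he, rfl⟩
    · have := hzX i hi _ he
      simpa using this
  · have := hterm _ (key N le_rfl)
    simpa using this
end
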